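/- In the repair setup below, let t_j ∈ W_j (j ∈ A) be nonzero vectors satisfying ∑_{j∈A} t_j = 0 and W_j = S_j ⊕ span(t_j) for every j ∈ A, and set T := span{t_j : j ∈ A}. Then dim(∑_{j∈A} S_j) = k(k−1), and the ambient space decomposes as the internal direct sum 𝓕 = (∑_{j∈A} S_j) ⊕ T. -/

import Mathlib

/-- An `(card ι, k, d)` linear exact-repair regeneration code with parameters
`(α, β, F)` over a field `K`: an `F`-dimensional ambient space `V` with node
subspaces `W i` of dimension at most `α`, such that any `k` nodes span `V`
(data recovery), and any node can be repaired from any `d` other nodes, each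
contributing a subspace of dimension at most `β` (node repair). -/
def IsERCode {K : Type} [Field K] {V : Type} [AddCommGroup V] [Module K V]
    {ι : Type} (k d α β F : ℕ) (W : ι → Submodule K V) : Prop :=
  FiniteDimensional K V ∧
  Module.finrank K V = F ∧
  (∀ i, Module.finrank K (W i) ≤ α) ∧
  (∀ A : Finset ι, A.card = k → ∑ j ∈ A, W j = ⊤) ∧
  (∀ (x : ι) (A : Finset ι), x ∉ A → A.card = d →
    ∃ S : ι → Submodule K V,
      (∀ j ∈ A, S j ≤ W j ∧ Module.finrank K (S j) ≤ β) ∧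
      W x ≤ ∑ j ∈ A, S j)

/-- Append a new node `Wst` to the family `W`, giving a family indexed by `Option ι`. -/
def extendCode {K : Type} [Field K] {V : Type} [AddCommGroup V] [Module K V]
    {ι : Type} (W : ι → Submodule K V) (Wst : Submodule K V) :
    Option ι → Submodule K V :=
  fun o => o.elim Wst W

/-!
Put `P = ∑ j ∈ A, S j` and `T = span {t j | j ∈ A}`. Since `W j = S j ⊔ span {t j}`,
data recovery gives `P ⊔ T = ∑ j ∈ A, W j = ⊤`. On the other hand `dim P ≤ k (k - 1)` by
subadditivity, and `dim T ≤ k - 1` because the relation `∑ t j = 0` makes one of the `k`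
generators redundant. As `dim 𝓕 = k² - 1 = k (k - 1) + (k - 1)`, both bounds are attained and
`P ⊓ T = 0`.
-/

open Module

namespace Submodule

variable {K V ι : Type*} [Field K] [AddCommGroup V] [Module K V]

theorem finrank_finsetSum_le [FiniteDimensional K V] (A : Finset ι) (f : ι → Submodule K V) :
    finrank K ↥(∑ j ∈ A, f j) ≤ ∑ j ∈ A, finrank K ↥(f j) :=
  Finset.le_sum_of_subadditive (fun p : Submodule K V => finrank K p) (finrank_bot K V).le
    (fun p q => finrank_add_le_finrank_add_finrank p q) A f

theorem span_image_eq_finsetSum (A : Finset ι) (t : ι → V) :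
    span K (t '' A) = ∑ j ∈ A, span K {t j} := by
  rw [span_eq_iSup_of_singleton_spans, iSup_image]
  exact (Finset.sup_eq_iSup A _).symm

theorem finrank_span_image_le_card_sub_one {A : Finset ι} {t : ι → V}
    (ht : ∑ j ∈ A, t j = 0) :
    finrank K (span K (t '' A)) ≤ A.card - 1 := by
  classical
  rcases A.eq_empty_or_nonempty with rfl | ⟨j₀, hj₀⟩
  · rw [Finset.coe_empty, Set.image_empty, span_empty, finrank_bot, Finset.card_empty]
  have hmem : t j₀ ∈ span K (t '' ↑(A.erase j₀)) := by
    rw [eq_neg_of_add_eq_zero_left ((A.add_sum_erase t hj₀).trans ht)]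
    exact neg_mem (sum_mem fun i hi => subset_span ⟨i, hi, rfl⟩)
  have himage : t '' ↑A = insert (t j₀) (t '' ↑(A.erase j₀)) := by
    rw [← Set.image_insert_eq, Finset.coe_erase, Set.insert_sdiff_singleton,
      Set.insert_eq_of_mem hj₀]
  calc finrank K (span K (t '' A)) = finrank K (span K ((A.erase j₀).image t : Set V)) := by
        rw [himage, span_insert_eq_span hmem, Finset.coe_image]
    _ ≤ ((A.erase j₀).image t).card := finrank_span_finset_le_card _
    _ ≤ (A.erase j₀).card := Finset.card_image_le
    _ = A.card - 1 := Finset.card_erase_of_mem hj₀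

theorem finrank_eq_and_disjoint_of_sup_eq_top [FiniteDimensional K V] {P T : Submodule K V}
    {a b : ℕ} (hsup : P ⊔ T = ⊤) (hP : finrank K P ≤ a) (hT : finrank K T ≤ b)
    (hV : finrank K V = a + b) :
    finrank K P = a ∧ Disjoint P T := by
  have := finrank_sup_add_finrank_inf_eq P T
  rw [hsup, finrank_top] at this
  exact ⟨by omega, disjoint_iff.mpr (finrank_eq_zero.mp (by omega))⟩

end Submodule

theorem stmt10_general {K : Type} [Field K] {V : Type} [AddCommGroup V] [Module K V]
    (n k : ℕ)
    (W : Fin n → Submodule K V)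
    (hW : IsERCode k k k (k - 1) (k ^ 2 - 1) W)
    (A : Finset (Fin n)) (hA : A.card = k)
    (S : Fin n → Submodule K V)
    (hSdim : ∀ j ∈ A, Module.finrank K (S j) ≤ k - 1)
    (t : Fin n → V)
    (htsum : ∑ j ∈ A, t j = 0)
    (htds : ∀ j ∈ A, Disjoint (S j) (Submodule.span K {t j}) ∧
      S j ⊔ Submodule.span K {t j} = W j)
    :
    Module.finrank K ↥(∑ j ∈ A, S j) = k * (k - 1) ∧
    Disjoint (∑ j ∈ A, S j) (Submodule.span K (t '' ↑A)) ∧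
    (∑ j ∈ A, S j) ⊔ Submodule.span K (t '' ↑A) = ⊤ := by
  obtain ⟨hfin, hF, -, hdata, -⟩ := hW
  have hsup : (∑ j ∈ A, S j) ⊔ Submodule.span K (t '' ↑A) = ⊤ := by
    rw [Submodule.span_image_eq_finsetSum, ← Submodule.add_eq_sup, ← Finset.sum_add_distrib,
      ← hdata A hA]
    exact Finset.sum_congr rfl fun j hj => (htds j hj).2
  have hP : finrank K ↥(∑ j ∈ A, S j) ≤ k * (k - 1) :=
    calc finrank K ↥(∑ j ∈ A, S j) ≤ ∑ j ∈ A, finrank K (S j) :=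
          Submodule.finrank_finsetSum_le A S
      _ ≤ ∑ _j ∈ A, (k - 1) := Finset.sum_le_sum hSdim
      _ = k * (k - 1) := by rw [Finset.sum_const, hA, smul_eq_mul]
  have hT : finrank K (Submodule.span K (t '' ↑A)) ≤ k - 1 :=
    hA ▸ Submodule.finrank_span_image_le_card_sub_one htsum
  have hV : finrank K V = k * (k - 1) + (k - 1) := by
    rw [hF]
    cases k with
    | zero => rfl
    | succ m => simp only [Nat.add_sub_cancel]; ring_nf; omega
  obtain ⟨hPdim, hdisj⟩ := Submodule.finrank_eq_and_disjoint_of_sup_eq_top hsup hP hT hV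
  exact ⟨hPdim, hdisj, hsup⟩

/-- in the repair setup, with `t` as in Statement 5 and
`T = span {t j : j ∈ A}`, the total repair space has dimension `k * (k - 1)` and
the ambient space is the internal direct sum `(∑ j ∈ A, S j) ⊕ T`. -/
theorem stmt10 {K : Type} [Field K] {V : Type} [AddCommGroup V] [Module K V]
    (n k : ℕ) (hk : 2 ≤ k) (hn : k + 1 ≤ n)
    (W : Fin n → Submodule K V)
    (hW : IsERCode k k k (k - 1) (k ^ 2 - 1) W)
    (x : Fin n) (A : Finset (Fin n)) (hx : x ∉ A) (hA : A.card = k)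
    (S : Fin n → Submodule K V)
    (hSW : ∀ j ∈ A, S j ≤ W j)
    (hSdim : ∀ j ∈ A, Module.finrank K (S j) ≤ k - 1)
    (hrep : W x ≤ ∑ j ∈ A, S j)
    (t : Fin n → V)
    (ht0 : ∀ j ∈ A, t j ≠ 0) (htW : ∀ j ∈ A, t j ∈ W j)
    (htsum : ∑ j ∈ A, t j = 0)
    (htds : ∀ j ∈ A, Disjoint (S j) (Submodule.span K {t j}) ∧
      S j ⊔ Submodule.span K {t j} = W j)
    :
    Module.finrank K ↥(∑ j ∈ A, S j) = k * (k - 1) ∧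
    Disjoint (∑ j ∈ A, S j) (Submodule.span K (t '' ↑A)) ∧
    (∑ j ∈ A, S j) ⊔ Submodule.span K (t '' ↑A) = ⊤ :=
  stmt10_general n k W hW A hA S hSdim t htsum htds
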